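/- For 1 ≤ i ≤ m+n, the isomorphism ρ_{n|m} ∘ ω_{n|m} : Y(gl_{n|m}) → Y(gl_{m|n}) maps the quasideterminant d_i(v) of Y(gl_{n|m}) to the inverse d_{m+n+1−i}(v)^{−1} of the quasideterminant d_{m+n+1−i}(v) of Y(gl_{m|n}). -/

import Mathlib

/-!
Common setup: the super Yangian `Y(gl_{m|n})`, defined as the quotient of the free
algebra on generators `t_{ij}^{(r)}` (here `(i, j, r) : Fin (m+n) × Fin (m+n) × ℕ`
encodes `t_{ij}^{(r+1)}`) by the defining relations, obtained by equating the
coefficients of `u^{-r} v^{-s}` in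
`(u-v)[t_{ij}(u), t_{kl}(v)]
   = (-1)^{ī j̄ + ī k̄ + j̄ k̄} (t_{kj}(u) t_{il}(v) - t_{kj}(v) t_{il}(u))`.
Power series in `u^{-1}` are modelled by `PowerSeries`, whose variable stands
for `u^{-1}`.
-/

noncomputable section

namespace SuperYangian

open scoped BigOperators

/-- Generator index: `(i, j, r)` encodes the generator `t_{ij}^{(r+1)}`. -/
abbrev Gen (N : ℕ) := Fin N × Fin N × ℕ

/-- The free algebra on the generators. -/
abbrev FA (N : ℕ) := FreeAlgebra ℂ (Gen N)

/-- Parity of an index: `0` for the first `m` indices, `1` for the remaining ones. -/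
def par (m : ℕ) {N : ℕ} (i : Fin N) : ℕ := if (i : ℕ) < m then 0 else 1

/-- The sign `(-1)^{ī j̄ + ī k̄ + j̄ k̄}`. -/
def sgn3 (m : ℕ) {N : ℕ} (i j k : Fin N) : ℤ :=
  (-1) ^ (par m i * par m j + par m i * par m k + par m j * par m k)

/-- The series `t_{ij}(u) = δ_{ij} + Σ_{r ≥ 1} t_{ij}^{(r)} u^{-r}` over the free algebra. -/
def tF {N : ℕ} (i j : Fin N) : PowerSeries (FA N) :=
  PowerSeries.mk fun r =>
    if r = 0 then (if i = j then 1 else 0) else FreeAlgebra.ι ℂ (i, j, r - 1)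

/-- The element of the free algebra expressing, at bidegree `u^{-r} v^{-s}`, the defining
relation `(u-v)[t_{ij}(u), t_{kl}(v)]
  = (-1)^{ī j̄ + ī k̄ + j̄ k̄}(t_{kj}(u) t_{il}(v) - t_{kj}(v) t_{il}(u))`. -/
def relElt (m : ℕ) {N : ℕ} (i j k l : Fin N) (r s : ℕ) : FA N :=
  ((PowerSeries.coeff (r+1) (tF i j)) * (PowerSeries.coeff s (tF k l))
      - (PowerSeries.coeff s (tF k l)) * (PowerSeries.coeff (r+1) (tF i j)))
  - ((PowerSeries.coeff r (tF i j)) * (PowerSeries.coeff (s+1) (tF k l))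
      - (PowerSeries.coeff (s+1) (tF k l)) * (PowerSeries.coeff r (tF i j)))
  - sgn3 m i j k •
      ((PowerSeries.coeff r (tF k j)) * (PowerSeries.coeff s (tF i l))
        - (PowerSeries.coeff s (tF k j)) * (PowerSeries.coeff r (tF i l)))

/-- The defining relations of `Y(gl_{m|n})`. -/
inductive YRel (m n : ℕ) : FA (m+n) → FA (m+n) → Prop
  | rel (i j k l : Fin (m+n)) (r s : ℕ) : YRel m n (relElt m i j k l r s) 0

/-- The super Yangian `Y(gl_{m|n})`. -/
abbrev Yangian (m n : ℕ) := RingQuot (YRel m n)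

/-- The canonical projection from the free algebra onto the Yangian. -/
def proj (m n : ℕ) : FA (m+n) →ₐ[ℂ] Yangian m n := RingQuot.mkAlgHom ℂ (YRel m n)

/-- The generator `t_{ij}^{(r+1)}` of `Y(gl_{m|n})` (`tGen i j r` is `t_{ij}^{(r+1)}`,
so that as `r` ranges over `ℕ` we get exactly the generators `t_{ij}^{(s)}`, `s ≥ 1`). -/
def tGen {m n : ℕ} (i j : Fin (m+n)) (r : ℕ) : Yangian m n :=
  proj m n (FreeAlgebra.ι ℂ (i, j, r))

/-- The generating series `t_{ij}(u) ∈ Y(gl_{m|n})[[u^{-1}]]`. -/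
def t {m n : ℕ} (i j : Fin (m+n)) : PowerSeries (Yangian m n) :=
  PowerSeries.mk fun r => if r = 0 then (if i = j then 1 else 0) else tGen i j (r - 1)

/-- The matrix `T(u)`. -/
def T (m n : ℕ) : Matrix (Fin (m+n)) (Fin (m+n)) (PowerSeries (Yangian m n)) :=
  Matrix.of fun i j => t i j

/-- The inverse matrix `T(u)^{-1}` (`T(u)` is a unit of the matrix ring, since its
constant term is the identity matrix, so `Ring.inverse` produces the genuine inverse). -/
def T' (m n : ℕ) : Matrix (Fin (m+n)) (Fin (m+n)) (PowerSeries (Yangian m n)) :=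
  Ring.inverse (T m n)

/-- The series `t'_{ij}(u)`: the `(i,j)` entry of `T(u)^{-1}`. -/
def t' {m n : ℕ} (i j : Fin (m+n)) : PowerSeries (Yangian m n) := T' m n i j

/-- `g(u - c)`: substitute `u - c` for `u` and expand in powers of `u^{-1}`, using
`(u-c)^{-r} = Σ_{s ≥ 0} C(r+s-1, s) c^s u^{-r-s}`. -/
def shift {A : Type*} [Ring A] (c : ℤ) (g : PowerSeries A) : PowerSeries A :=
  PowerSeries.mk fun p => ∑ r ∈ Finset.range (p+1),
    (((p-1).choose (p-r) : ℤ) * c ^ (p-r)) • PowerSeries.coeff (R := A) r g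

/-- `g(-u)`: replace `u^{-r}` by `(-1)^r u^{-r}`. -/
def negu {A : Type*} [Ring A] (g : PowerSeries A) : PowerSeries A :=
  PowerSeries.mk fun p => ((-1 : ℤ) ^ p) • PowerSeries.coeff (R := A) p g

/-- The quantum determinant type series
`C_m(u) = Σ_{τ ∈ S_m} sgn τ · t_{τ(1)1}(u) t_{τ(2)2}(u-1) ⋯ t_{τ(m)m}(u-m+1)`
of the `gl_m` block of `Y(gl_{m|n})`. -/
def Cm (m n : ℕ) : PowerSeries (Yangian m n) :=
  ∑ τ : Equiv.Perm (Fin m), (Equiv.Perm.sign τ : ℤ) •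
    ((List.finRange m).map fun (a : Fin m) =>
      shift ((a : ℕ) : ℤ)
        (t (Fin.castLE (Nat.le_add_right m n) (τ a))
           (Fin.castLE (Nat.le_add_right m n) a))).prod

/-- The second factor of the quantum Berezinian:
`Σ_{σ ∈ S_n} sgn σ · t'_{m+1, m+σ(1)}(u-m+1) ⋯ t'_{m+n, m+σ(n)}(u-m+n)`. -/
def berSecond (m n : ℕ) : PowerSeries (Yangian m n) :=
  ∑ σ : Equiv.Perm (Fin n), (Equiv.Perm.sign σ : ℤ) •
    ((List.finRange n).map fun (b : Fin n) =>
      shift ((m : ℤ) - 1 - (b : ℕ))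
        (t' (Fin.natAdd m b) (Fin.natAdd m (σ b)))).prod

/-- The quantum Berezinian `b_{m|n}(u)`. -/
def ber (m n : ℕ) : PowerSeries (Yangian m n) := Cm m n * berSecond m n

/-- Gauss decomposition data: `D` is diagonal (with invertible diagonal entries, i.e.
constant term `1`), `E` upper unitriangular, `F` lower unitriangular, and
`T(u) = F(u) D(u) E(u)`. -/
def IsGauss (m n : ℕ)
    (F D E : Matrix (Fin (m+n)) (Fin (m+n)) (PowerSeries (Yangian m n))) : Prop :=
  (∀ i j, i ≠ j → D i j = 0) ∧
  (∀ i, PowerSeries.constantCoeff (D i i) = 1) ∧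
  (∀ i, E i i = 1) ∧ (∀ i j : Fin (m+n), (j : ℕ) < (i : ℕ) → E i j = 0) ∧
  (∀ i, F i i = 1) ∧ (∀ i j : Fin (m+n), (i : ℕ) < (j : ℕ) → F i j = 0) ∧
  T m n = F * D * E

/-- The top-left `(i+1) × (i+1)` submatrix of `T(u)` (`0`-indexed `i`). -/
def subT (m n : ℕ) (i : Fin (m+n)) :
    Matrix (Fin ((i : ℕ)+1)) (Fin ((i : ℕ)+1)) (PowerSeries (Yangian m n)) :=
  Matrix.of fun a b => t (Fin.castLE i.isLt a) (Fin.castLE i.isLt b)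

/-- The quasideterminant `d_{i+1}(u)` (`0`-indexed: `dQ m n i` is the `(i+1, i+1)`
quasideterminant of the top-left `(i+1) × (i+1)` submatrix of `T(u)`). -/
def dQ (m n : ℕ) (i : Fin (m+n)) : PowerSeries (Yangian m n) :=
  Ring.inverse (Ring.inverse (subT m n i) (Fin.last (i : ℕ)) (Fin.last (i : ℕ)))

/-- Formal series in the two variables `u^{-1}`, `v^{-1}` (variable `0` is `u^{-1}`,
variable `1` is `v^{-1}`). -/
abbrev Bi (A : Type*) := MvPowerSeries (Fin 2) A

/-- Embed a series in `u^{-1}` into the two-variable series ring. -/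
def inU {A : Type*} [Semiring A] (g : PowerSeries A) : Bi A :=
  fun d => if d 1 = 0 then PowerSeries.coeff (R := A) (d 0) g else 0

/-- Embed a series in `v^{-1}` into the two-variable series ring. -/
def inV {A : Type*} [Semiring A] (g : PowerSeries A) : Bi A :=
  fun d => if d 0 = 0 then PowerSeries.coeff (R := A) (d 1) g else 0

/-- The coefficient of `u^{-r} v^{-s}`. -/
def bc {A : Type*} [Semiring A] (r s : ℕ) (g : Bi A) : A :=
  MvPowerSeries.coeff (R := A) (Finsupp.single 0 r + Finsupp.single 1 s) g

/-- The characterizing property of the automorphism `ω_{m|n}`: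
`ω(t_{ij}(u)) = t'_{ij}(-u)`, i.e. `T(u) ↦ T(-u)^{-1}` coefficientwise. -/
def omegaProp (m n : ℕ) (ω : Yangian m n →ₐ[ℂ] Yangian m n) : Prop :=
  ∀ i j : Fin (m+n), PowerSeries.map ω.toRingHom (t i j) = negu (t' i j)

/-- The index map `i ↦ m+n+1-i` (in `1`-based labelling) from the indices of
`Y(gl_{m|n})` to those of `Y(gl_{n|m})`. -/
def flipIdx {m n : ℕ} (i : Fin (m+n)) : Fin (n+m) :=
  ⟨m + n - 1 - (i : ℕ), by have := i.isLt; omega⟩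

/-- The characterizing property of the isomorphism `ρ_{m|n} : Y(gl_{m|n}) → Y(gl_{n|m})`:
`ρ(t_{ij}(u)) = t_{m+n+1-i, m+n+1-j}(-u)`. -/
def rhoProp (m n : ℕ) (ρ : Yangian m n →ₐ[ℂ] Yangian n m) : Prop :=
  ∀ i j : Fin (m+n), PowerSeries.map ρ.toRingHom (t i j) = negu (t (flipIdx i) (flipIdx j))

/-- The index map `i ↦ k + i` from indices of `Y(gl_{m|n})` to indices of
`Y(gl_{m+k|n})` (whose total size `M + n` is recorded via `M = m + k`). -/
def addIdx {m n : ℕ} (k M : ℕ) (hM : M = m + k) (i : Fin (m+n)) : Fin (M+n) :=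
  ⟨k + (i : ℕ), by have := i.isLt; omega⟩

/-- The characterizing property of the inclusion `φ_{m|n} : Y(gl_{m|n}) → Y(gl_{m+k|n})`:
`t_{ij}^{(r)} ↦ t_{k+i, k+j}^{(r)}`. -/
def phiProp (m n k M : ℕ) (hM : M = m + k) (φ : Yangian m n →ₐ[ℂ] Yangian M n) : Prop :=
  ∀ i j : Fin (m+n),
    PowerSeries.map φ.toRingHom (t i j) = t (addIdx k M hM i) (addIdx k M hM j)

/-- The `(k+1, k+1)` quasideterminant of a `(k+1) × (k+1)` matrix. -/
def qdet {R : Type*} [Ring R] {k : ℕ} (X : Matrix (Fin (k+1)) (Fin (k+1)) R) : R :=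
  Ring.inverse (Ring.inverse X (Fin.last k) (Fin.last k))

end SuperYangian

/-!
Applying `u ↦ -u` twice, `ρ ∘ ω` sends `t_{ab}(u)` to `t'_{a'b'}(u)` with `a' = m+n+1-a`. Hence it
maps the top-left `i × i` block of `T(u)` to the bottom-right block `W` of `T(u)⁻¹` on the indices
`k, …, m+n` (`k = m+n+1-i`), read in reverse order, and `d_i(u)⁻¹`, the last diagonal entry of
the inverse of that block, to the `(k,k)` entry of `W⁻¹`. Block inversion identifies `W⁻¹` with
the Schur complement `D - C A⁻¹ B` of the top-left `(k-1) × (k-1)` block `A` of `T(u)`; its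
`(k,k)` entry is `t_{kk}(u) - r A⁻¹ c`, which is also `d_k(u)` by the same block inversion applied
to the top-left `k × k` block of `T(u)`.
-/

open scoped Ring

section RingInverse

variable {M N : Type*} [MonoidWithZero M] [MonoidWithZero N]

theorem map_ringInverse {F : Type*} [FunLike F M N] [MonoidHomClass F M N] (f : F) {x : M}
    (hx : IsUnit x) : f x⁻¹ʳ = (f x)⁻¹ʳ := by
  obtain ⟨u, rfl⟩ := hx
  rw [Ring.inverse_unit]
  exact (Ring.inverse_unit (Units.map (f : M →* N) u)).symm

theorem MulEquiv.map_ringInverse (e : M ≃* N) (x : M) : e x⁻¹ʳ = (e x)⁻¹ʳ := by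
  by_cases hx : IsUnit x
  · exact _root_.map_ringInverse e hx
  · rw [Ring.inverse_non_unit x hx, Ring.inverse_non_unit _ (by simpa using hx), map_zero]

end RingInverse

namespace Matrix

variable {R : Type*} [Ring R] {ι κ n : Type*} [Fintype ι] [Fintype κ] [Fintype n]
  [DecidableEq ι] [DecidableEq κ] [DecidableEq n]

theorem submatrix_ringInverse (e : ι ≃ n) (M : Matrix n n R) :
    (M.submatrix e e)⁻¹ʳ = M⁻¹ʳ.submatrix e e :=
  ((reindexRingEquiv R e.symm).toMulEquiv.map_ringInverse M).symm

theorem isUnit_apply_of_unique [Unique ι] {W : Matrix ι ι R} (hW : IsUnit W) :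
    IsUnit (W default default) := by
  obtain rfl : ‹Fintype ι› = Unique.fintype := Subsingleton.elim _ _
  exact hW.map (uniqueRingEquiv (m := ι) (A := R))

theorem ringInverse_apply_of_unique [Unique ι] (W : Matrix ι ι R) :
    W⁻¹ʳ default default = (W default default)⁻¹ʳ := by
  obtain rfl : ‹Fintype ι› = Unique.fintype := Subsingleton.elim _ _
  exact (uniqueRingEquiv (m := ι) (A := R)).toMulEquiv.map_ringInverse W

theorem schur_mul_toBlocks₂₂_ringInverse (X : Matrix (ι ⊕ κ) (ι ⊕ κ) R) (hX : IsUnit X)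
    (hA : IsUnit X.toBlocks₁₁) :
    (X.toBlocks₂₂ - X.toBlocks₂₁ * X.toBlocks₁₁⁻¹ʳ * X.toBlocks₁₂) * X⁻¹ʳ.toBlocks₂₂ = 1 ∧
      X⁻¹ʳ.toBlocks₂₂ * (X.toBlocks₂₂ - X.toBlocks₂₁ * X.toBlocks₁₁⁻¹ʳ * X.toBlocks₁₂) = 1 := by
  have blocks_mul_eq_one : ∀ Y Z : Matrix (ι ⊕ κ) (ι ⊕ κ) R, Y * Z = 1 →
      fromBlocks (Y.toBlocks₁₁ * Z.toBlocks₁₁ + Y.toBlocks₁₂ * Z.toBlocks₂₁)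
        (Y.toBlocks₁₁ * Z.toBlocks₁₂ + Y.toBlocks₁₂ * Z.toBlocks₂₂)
        (Y.toBlocks₂₁ * Z.toBlocks₁₁ + Y.toBlocks₂₂ * Z.toBlocks₂₁)
        (Y.toBlocks₂₁ * Z.toBlocks₁₂ + Y.toBlocks₂₂ * Z.toBlocks₂₂) = fromBlocks 1 0 0 1 := by
    intro Y Z hYZ
    rw [← fromBlocks_multiply, fromBlocks_toBlocks, fromBlocks_toBlocks, fromBlocks_one, hYZ]
  obtain ⟨-, h₁₂, -, h₂₂⟩ :=
    fromBlocks_inj.mp (blocks_mul_eq_one _ _ (Ring.mul_inverse_cancel X hX))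
  obtain ⟨-, -, h₂₁', h₂₂'⟩ :=
    fromBlocks_inj.mp (blocks_mul_eq_one _ _ (Ring.inverse_mul_cancel X hX))
  constructor
  · calc _ = X.toBlocks₂₂ * X⁻¹ʳ.toBlocks₂₂
          - X.toBlocks₂₁ * X.toBlocks₁₁⁻¹ʳ * (X.toBlocks₁₂ * X⁻¹ʳ.toBlocks₂₂) := by
          rw [Matrix.sub_mul, Matrix.mul_assoc (X.toBlocks₂₁ * _)]
      _ = X.toBlocks₂₂ * X⁻¹ʳ.toBlocks₂₂ + X.toBlocks₂₁ * X⁻¹ʳ.toBlocks₁₂ := by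
          rw [eq_neg_of_add_eq_zero_right h₁₂, Matrix.mul_neg, ← Matrix.mul_assoc,
            Matrix.mul_assoc X.toBlocks₂₁, Ring.inverse_mul_cancel _ hA, Matrix.mul_one,
            sub_neg_eq_add]
      _ = 1 := by rw [add_comm, h₂₂]
  · calc _ = X⁻¹ʳ.toBlocks₂₂ * X.toBlocks₂₂
          - X⁻¹ʳ.toBlocks₂₂ * X.toBlocks₂₁ * X.toBlocks₁₁⁻¹ʳ * X.toBlocks₁₂ := by
          rw [Matrix.mul_sub, ← Matrix.mul_assoc, ← Matrix.mul_assoc]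
      _ = X⁻¹ʳ.toBlocks₂₂ * X.toBlocks₂₂ + X⁻¹ʳ.toBlocks₂₁ * X.toBlocks₁₂ := by
          rw [eq_neg_of_add_eq_zero_right h₂₁', Matrix.neg_mul, Matrix.neg_mul,
            Matrix.mul_assoc X⁻¹ʳ.toBlocks₂₁, Ring.mul_inverse_cancel _ hA, Matrix.mul_one,
            sub_neg_eq_add]
      _ = 1 := by rw [add_comm, h₂₂']

theorem isUnit_toBlocks₂₂_ringInverse (X : Matrix (ι ⊕ κ) (ι ⊕ κ) R) (hX : IsUnit X)
    (hA : IsUnit X.toBlocks₁₁) : IsUnit X⁻¹ʳ.toBlocks₂₂ :=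
  have h := schur_mul_toBlocks₂₂_ringInverse X hX hA
  ⟨⟨_, _, h.2, h.1⟩, rfl⟩

theorem ringInverse_toBlocks₂₂_ringInverse (X : Matrix (ι ⊕ κ) (ι ⊕ κ) R) (hX : IsUnit X)
    (hA : IsUnit X.toBlocks₁₁) :
    X⁻¹ʳ.toBlocks₂₂⁻¹ʳ = X.toBlocks₂₂ - X.toBlocks₂₁ * X.toBlocks₁₁⁻¹ʳ * X.toBlocks₁₂ :=
  have h := schur_mul_toBlocks₂₂_ringInverse X hX hA
  Ring.inverse_unit ⟨_, _, h.2, h.1⟩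

/-- The quasideterminant `|M|_{xx}` of the submatrix of `M` on the indices `f(ι) ∪ {x}`, by the
Gelfand–Retakh formula `m_{xx} - r · (M_{f,f})⁻¹ · c`. -/
def quasidet (M : Matrix n n R) (f : ι → n) (x : n) : R :=
  M x x - (fun c => M x (f c)) ᵥ* (M.submatrix f f)⁻¹ʳ ⬝ᵥ fun d => M (f d) x

theorem isUnit_submatrix_ringInverse_inr (M : Matrix n n R) (e : ι ⊕ κ ≃ n) (hM : IsUnit M)
    (hA : IsUnit (M.submatrix (e ∘ Sum.inl) (e ∘ Sum.inl))) :
    IsUnit (M⁻¹ʳ.submatrix (e ∘ Sum.inr) (e ∘ Sum.inr)) := by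
  have := isUnit_toBlocks₂₂_ringInverse (M.submatrix e e) (hM.map (reindexRingEquiv R e.symm)) hA
  rwa [submatrix_ringInverse] at this

theorem ringInverse_submatrix_ringInverse_inr_apply (M : Matrix n n R) (e : ι ⊕ κ ≃ n)
    (hM : IsUnit M) (hA : IsUnit (M.submatrix (e ∘ Sum.inl) (e ∘ Sum.inl))) (a : κ) :
    (M⁻¹ʳ.submatrix (e ∘ Sum.inr) (e ∘ Sum.inr))⁻¹ʳ a a
      = quasidet M (e ∘ Sum.inl) (e (.inr a)) := by
  have := ringInverse_toBlocks₂₂_ringInverse (M.submatrix e e)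
    (hM.map (reindexRingEquiv R e.symm)) hA
  rw [submatrix_ringInverse] at this
  exact congrFun (congrFun this a) a

end Matrix

namespace PowerSeries

variable (S : Type*) [Ring S] (n : Type*) [Fintype n] [DecidableEq n]

def matrixEquiv : PowerSeries (Matrix n n S) ≃+* Matrix n n (PowerSeries S) where
  toFun g := Matrix.of fun a b => mk fun p => coeff p g a b
  invFun M := mk fun p => Matrix.of fun a b => coeff p (M a b)
  left_inv g := by ext; simp
  right_inv M := by ext; simp
  map_add' g h := by ext; simp
  map_mul' g h := by
    ext a b p
    simp only [Matrix.of_apply, coeff_mk, coeff_mul, Matrix.mul_apply, Matrix.sum_apply, map_sum]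
    exact Finset.sum_comm

variable {S n}

theorem _root_.Matrix.isUnit_of_isUnit_map_constantCoeff {M : Matrix n n (PowerSeries S)}
    (hM : IsUnit (M.map constantCoeff)) : IsUnit M := by
  have hunit : IsUnit ((matrixEquiv S n).symm M) := by
    rw [isUnit_iff_constantCoeff]
    convert hM
    ext a b
    rw [← coeff_zero_eq_constantCoeff_apply]
    simp [matrixEquiv]
  simpa using hunit.map (matrixEquiv S n)

end PowerSeries

namespace SuperYangian

section Qdet

variable {R : Type*} [Ring R] {k : ℕ} (X : Matrix (Fin (k+1)) (Fin (k+1)) R)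

theorem isUnit_ringInverse_apply_last (hX : IsUnit X)
    (hA : IsUnit (X.submatrix Fin.castSucc Fin.castSucc)) :
    IsUnit (X⁻¹ʳ (Fin.last k) (Fin.last k)) :=
  Matrix.isUnit_apply_of_unique (Matrix.isUnit_submatrix_ringInverse_inr X finSumFinEquiv hX hA)

theorem qdet_eq_quasidet (hX : IsUnit X) (hA : IsUnit (X.submatrix Fin.castSucc Fin.castSucc)) :
    qdet X = Matrix.quasidet X Fin.castSucc (Fin.last k) :=
  (Matrix.ringInverse_apply_of_unique _).symm.trans
    (Matrix.ringInverse_submatrix_ringInverse_inr_apply X finSumFinEquiv hX hA 0)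

end Qdet

def neguRingHom (A : Type*) [Ring A] : PowerSeries A →+* PowerSeries A where
  toFun := negu
  map_one' := by
    ext p
    by_cases hp : p = 0 <;> simp [negu, PowerSeries.coeff_one, hp]
  map_mul' f g := by
    ext p
    simp only [negu, PowerSeries.coeff_mk, PowerSeries.coeff_mul, Finset.smul_sum]
    refine Finset.sum_congr rfl fun x hx => ?_
    rw [smul_mul_smul_comm, ← pow_add, Finset.HasAntidiagonal.mem_antidiagonal.mp hx]
  map_zero' := by ext; simp [negu]
  map_add' f g := by ext; simp [negu]

theorem negu_negu {A : Type*} [Ring A] (g : PowerSeries A) : negu (negu g) = g := by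
  ext p
  simp only [negu, PowerSeries.coeff_mk, smul_smul, ← mul_pow, neg_mul_neg, one_mul, one_pow,
    one_smul]

theorem map_negu {A B : Type*} [Ring A] [Ring B] (f : A →+* B) (g : PowerSeries A) :
    PowerSeries.map f (negu g) = negu (PowerSeries.map f g) := by
  ext p
  simp [negu]

theorem isUnit_submatrix_T (m n : ℕ) {p : ℕ} (f : Fin p → Fin (m+n))
    (hf : Function.Injective f) : IsUnit ((T m n).submatrix f f) := by
  apply Matrix.isUnit_of_isUnit_map_constantCoeff
  convert isUnit_one
  ext a b
  simp [T, t, Matrix.one_apply, hf.eq_iff]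

theorem isUnit_T (m n : ℕ) : IsUnit (T m n) :=
  isUnit_submatrix_T m n id Function.injective_id

theorem isUnit_subT (m n : ℕ) (i : Fin (m+n)) : IsUnit (subT m n i) :=
  isUnit_submatrix_T m n _ (Fin.castLE_injective _)

theorem isUnit_subT_submatrix_castSucc (m n : ℕ) (i : Fin (m+n)) :
    IsUnit ((subT m n i).submatrix Fin.castSucc Fin.castSucc) :=
  isUnit_submatrix_T m n _ ((Fin.castLE_injective _).comp (Fin.castSucc_injective _))

theorem dQ_eq_quasidet (m n : ℕ) (i : Fin (m+n)) :
    dQ m n i = Matrix.quasidet (T m n) (Fin.castLE i.isLt.le) i :=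
  qdet_eq_quasidet _ (isUnit_subT m n i) (isUnit_subT_submatrix_castSucc m n i)

def flipEquiv (m n : ℕ) : Fin (m+n) ≃ Fin (n+m) where
  toFun := flipIdx
  invFun := flipIdx
  left_inv i := Fin.ext (by simp only [flipIdx]; omega)
  right_inv i := Fin.ext (by simp only [flipIdx]; omega)

section RhoOmega

variable {m n : ℕ}

def flipSplitEquiv (j : Fin (n+m)) : Fin (flipIdx j : ℕ) ⊕ Fin ((j : ℕ) + 1) ≃ Fin (m+n) :=
  finSumFinEquiv.trans (finCongr (by simp only [flipIdx]; omega))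

theorem flipIdx_castLE (j : Fin (n+m)) (a : Fin ((j : ℕ) + 1)) :
    flipIdx (Fin.castLE j.isLt a) = flipSplitEquiv j (.inr a.rev) := by
  have := a.isLt
  ext
  show n + m - 1 - (a : ℕ) = (n + m - 1 - j) + ((j : ℕ) + 1 - ((a : ℕ) + 1))
  omega

theorem map_t'_of_rhoProp {ρ : Yangian n m →ₐ[ℂ] Yangian m n} (hρ : rhoProp n m ρ)
    (a b : Fin (n+m)) :
    PowerSeries.map ρ.toRingHom (t' a b) = negu (t' (flipIdx a) (flipIdx b)) := by
  have hT : (PowerSeries.map ρ.toRingHom).mapMatrix (T n m)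
      = ((neguRingHom _).mapMatrix (T m n)).submatrix (flipEquiv n m) (flipEquiv n m) :=
    Matrix.ext hρ
  calc PowerSeries.map ρ.toRingHom (t' a b)
      = ((PowerSeries.map ρ.toRingHom).mapMatrix (T n m)⁻¹ʳ) a b := rfl
    _ = ((neguRingHom _).mapMatrix (T m n)⁻¹ʳ) (flipIdx a) (flipIdx b) := by
      rw [map_ringInverse _ (isUnit_T n m), hT, Matrix.submatrix_ringInverse,
        ← map_ringInverse _ (isUnit_T m n)]
      rfl

theorem map_t_of_omegaProp_of_rhoProp {ω : Yangian n m →ₐ[ℂ] Yangian n m}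
    (hω : omegaProp n m ω) {ρ : Yangian n m →ₐ[ℂ] Yangian m n} (hρ : rhoProp n m ρ)
    (a b : Fin (n+m)) :
    PowerSeries.map (ρ.comp ω).toRingHom (t a b) = t' (flipIdx a) (flipIdx b) := by
  have hcomp : PowerSeries.map (ρ.comp ω).toRingHom (t a b)
      = PowerSeries.map ρ.toRingHom (PowerSeries.map ω.toRingHom (t a b)) := by
    ext
    simp
  rw [hcomp, hω, map_negu, map_t'_of_rhoProp hρ, negu_negu]

theorem mapMatrix_subT_of_omegaProp_of_rhoProp {ω : Yangian n m →ₐ[ℂ] Yangian n m}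
    (hω : omegaProp n m ω) {ρ : Yangian n m →ₐ[ℂ] Yangian m n} (hρ : rhoProp n m ρ)
    (j : Fin (n+m)) :
    (PowerSeries.map (ρ.comp ω).toRingHom).mapMatrix (subT n m j)
      = ((T' m n).submatrix (flipSplitEquiv j ∘ Sum.inr) (flipSplitEquiv j ∘ Sum.inr)).submatrix
          Fin.revPerm Fin.revPerm :=
  Matrix.ext fun a b => by
    simp only [RingHom.mapMatrix_apply, Matrix.map_apply, subT, Matrix.of_apply,
      map_t_of_omegaProp_of_rhoProp hω hρ, flipIdx_castLE]
    rfl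

theorem map_rho_comp_omega_dQ {ω : Yangian n m →ₐ[ℂ] Yangian n m} (hω : omegaProp n m ω)
    {ρ : Yangian n m →ₐ[ℂ] Yangian m n} (hρ : rhoProp n m ρ) (j : Fin (n+m)) :
    PowerSeries.map (ρ.comp ω).toRingHom (dQ n m j) = (dQ m n (flipIdx j))⁻¹ʳ := by
  set φ := PowerSeries.map (ρ.comp ω).toRingHom
  have hsub := isUnit_subT n m j
  have hcorner : IsUnit ((T m n).submatrix (flipSplitEquiv j ∘ Sum.inl)
      (flipSplitEquiv j ∘ Sum.inl)) :=
    isUnit_submatrix_T m n _ ((flipSplitEquiv j).injective.comp Sum.inl_injective)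
  calc φ (dQ n m j) = (φ ((subT n m j)⁻¹ʳ (Fin.last j) (Fin.last j)))⁻¹ʳ :=
        map_ringInverse φ (isUnit_ringInverse_apply_last _ hsub (isUnit_subT_submatrix_castSucc ..))
    _ = (((T' m n).submatrix (flipSplitEquiv j ∘ Sum.inr)
          (flipSplitEquiv j ∘ Sum.inr))⁻¹ʳ 0 0)⁻¹ʳ := by
        rw [show φ ((subT n m j)⁻¹ʳ (Fin.last j) (Fin.last j))
            = (φ.mapMatrix (subT n m j)⁻¹ʳ) (Fin.last j) (Fin.last j) from rfl,
          map_ringInverse _ hsub, mapMatrix_subT_of_omegaProp_of_rhoProp hω hρ,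
          Matrix.submatrix_ringInverse Fin.revPerm]
        simp
    _ = (dQ m n (flipIdx j))⁻¹ʳ := by
        rw [T', Matrix.ringInverse_submatrix_ringInverse_inr_apply _ _ (isUnit_T m n) hcorner,
          dQ_eq_quasidet]
        rfl

end RhoOmega

/-- For `1 ≤ i ≤ m+n`, the isomorphism
`ρ_{n|m} ∘ ω_{n|m} : Y(gl_{n|m}) → Y(gl_{m|n})` maps the quasideterminant `d_i(v)` of
`Y(gl_{n|m})` to the inverse of the quasideterminant `d_{m+n+1-i}(v)` of `Y(gl_{m|n})`
(`1`-based labels; `dQ` is `0`-indexed). -/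
theorem rho_omega_maps_dQ (m n : ℕ)
    (ω : Yangian n m →ₐ[ℂ] Yangian n m) (hω : omegaProp n m ω)
    (ρ : Yangian n m →ₐ[ℂ] Yangian m n) (hρ : rhoProp n m ρ)
    (i : ℕ) (hi1 : 1 ≤ i) (hi2 : i ≤ m + n) :
    PowerSeries.map (ρ.comp ω).toRingHom (dQ n m ⟨i-1, by omega⟩)
      = Ring.inverse (dQ m n ⟨m+n-i, by omega⟩) := by
  rw [map_rho_comp_omega_dQ hω hρ]
  congr 2
  exact Fin.ext (by simp only [flipIdx]; omega)

end SuperYangian
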